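/- For σ₁, σ₂ > 0, α ∈ (0.5, 1), and s > 0: Φ((σ₂/σ₁)Φ⁻¹(α) + (√2−1)s/σ₁) − Φ(−(σ₂/σ₁)Φ⁻¹(α) − (√2+1)s/σ₁) > Φ((σ₂/σ₁)Φ⁻¹(α) − s/σ₁) − Φ(−(σ₂/σ₁)Φ⁻¹(α) − s/σ₁). That is, the worst-case ball approach has strictly higher probability of an over-conservative solution than the density-ratio approach for every positive shift s. -/
import Mathlib


open MeasureTheory ProbabilityTheory

/-- Standard normal CDF. -/
noncomputable def Phi (t : ℝ) : ℝ := ((gaussianReal 0 1) (Set.Iic t)).toReal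

/-- Standard normal quantile function. -/
noncomputable def PhiInv (p : ℝ) : ℝ := sInf {t : ℝ | p ≤ Phi t}

lemma Phi_eq (t : ℝ) : Phi t = ∫ x in Set.Iic t, gaussianPDFReal 0 1 x := by
  rw [Phi, gaussianReal_apply_eq_integral 0 one_ne_zero,
    ENNReal.toReal_ofReal (integral_nonneg fun x => gaussianPDFReal_nonneg 0 1 x)]

lemma Phi_strictMono : StrictMono Phi := by
  intro a b hab
  simp only [Phi_eq]
  have hint : Integrable (gaussianPDFReal 0 1) := integrable_gaussianPDFReal 0 1
  have hsplit : ∫ x in Set.Iic b, gaussianPDFReal 0 1 x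
      = (∫ x in Set.Iic a, gaussianPDFReal 0 1 x) + ∫ x in Set.Ioc a b, gaussianPDFReal 0 1 x := by
    rw [← setIntegral_union (Set.Iic_disjoint_Ioc le_rfl) measurableSet_Ioc
      hint.integrableOn hint.integrableOn, Set.Iic_union_Ioc_eq_Iic hab.le]
  rw [hsplit]
  have hpos : 0 < ∫ x in Set.Ioc a b, gaussianPDFReal 0 1 x := by
    rw [← intervalIntegral.integral_of_le hab.le]
    exact intervalIntegral.intervalIntegral_pos_of_pos_on
      hint.intervalIntegrable (fun x _ => gaussianPDFReal_pos 0 1 x one_ne_zero) hab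
  linarith

theorem stmt11 (σ₁ σ₂ : ℝ) (hσ₁ : 0 < σ₁) (hσ₂ : 0 < σ₂)
    (α : ℝ) (hα : α ∈ Set.Ioo (1 / 2 : ℝ) 1) (s : ℝ) (hs : 0 < s) :
    Phi ((σ₂ / σ₁) * PhiInv α - s / σ₁) - Phi (-(σ₂ / σ₁) * PhiInv α - s / σ₁) <
      Phi ((σ₂ / σ₁) * PhiInv α + (Real.sqrt 2 - 1) * s / σ₁) -
        Phi (-(σ₂ / σ₁) * PhiInv α - (Real.sqrt 2 + 1) * s / σ₁) := by
  set a := (σ₂ / σ₁) * PhiInv α with ha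
  have hneg : -(σ₂ / σ₁) * PhiInv α = -a := by ring
  rw [hneg]
  have hsqrt : (0:ℝ) < Real.sqrt 2 := by positivity
  have hds : 0 < s / σ₁ := div_pos hs hσ₁
  have e1 : (Real.sqrt 2 - 1) * s / σ₁ = Real.sqrt 2 * (s / σ₁) - s / σ₁ := by ring
  have e2 : (Real.sqrt 2 + 1) * s / σ₁ = Real.sqrt 2 * (s / σ₁) + s / σ₁ := by ring
  have hmul : 0 < Real.sqrt 2 * (s / σ₁) := mul_pos hsqrt hds
  have h1 : Phi (a - s / σ₁) < Phi (a + (Real.sqrt 2 - 1) * s / σ₁) :=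
    Phi_strictMono (by rw [e1]; linarith)
  have h2 : Phi (-a - (Real.sqrt 2 + 1) * s / σ₁) < Phi (-a - s / σ₁) :=
    Phi_strictMono (by rw [e2]; linarith)
  linarith
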